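/- arXiv:1712.09038 — 2 statements merged into one kernel-verified Lean document; each statement's English description precedes it below -/
import Mathlib

section
/- Assume the lower decoupling condition: there exist c > 0 and k ∈ ℕ₀ such that for all t ∈ ℕ, all u ∈ Ω_t and all nonempty v ∈ Ω_fin, ∑_{ξ : τ_t − k ≤ |ξ| ≤ τ_t} P(uξv) ≥ e^{−c} P(u) P(v). Then the shift-invariant measure P is ergodic with respect to the left shift φ on Ω = A^ℕ. -/
/-!
Summing the decoupling inequality over words extends it from pairs of cylinders to pairs of
finite unions of cylinders, and averaging over the at most `k + 1` admissible gap lengths gives,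
for any two cylinder events `U` and `V`, a time `s` with
`P (U ∩ φ⁻ˢ V) ≥ e^{-c} / (k + 1) · P U · P V`.
If `B` were invariant with `0 < P B < 1`, approximate `B` by a cylinder event `U` and `Bᶜ` by a
cylinder event `V` up to `ε`. By invariance `U ∩ φ⁻ˢ V` is, up to `2ε`, contained in
`B ∩ φ⁻ˢ Bᶜ`, which is null; for small `ε` this contradicts the lower bound.
-/

open MeasureTheory

/-- The left shift on the one-sided shift space `A^ℕ`. -/
def shiftMap {A : Type*} (ω : ℕ → A) : ℕ → A := fun n => ω (n + 1)

/-- The cylinder set of a finite word. -/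
def cyl {A : Type*} (w : List A) : Set (ℕ → A) :=
  {ω | ∀ i : Fin w.length, ω i = w.get i}

open Filter Set
open scoped symmDiff Topology

section ErgodicCriterion

variable {α : Type*} [MeasurableSpace α] {μ : Measure α} [IsFiniteMeasure μ] {T : α → α}

lemma measureReal_inter_preimage_iterate_le_of_preimage_ae_eq (hT : MeasurePreserving T μ μ)
    {B : Set α} (hBm : MeasurableSet B) (hB : T ⁻¹' B =ᵐ[μ] B) (U : Set α) {V : Set α}
    (hV : MeasurableSet V) (n : ℕ) :
    μ.real (U ∩ T^[n] ⁻¹' V) ≤ μ.real (B ∆ U) + μ.real (Bᶜ ∆ V) := by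
  have hBn : μ.real (B ∆ (T^[n] ⁻¹' B)) = 0 := by
    rw [measureReal_def, measure_symmDiff_eq_zero_iff.2
      (hT.quasiMeasurePreserving.preimage_iterate_ae_eq n hB).symm, ENNReal.toReal_zero]
  have hsub : U ∩ T^[n] ⁻¹' V ⊆ (B ∆ U ∪ T^[n] ⁻¹' (Bᶜ ∆ V)) ∪ B ∆ (T^[n] ⁻¹' B) := by
    rintro x ⟨hxU, hxV⟩
    simp only [mem_union, mem_preimage, mem_symmDiff, mem_compl_iff]
    tauto
  calc μ.real (U ∩ T^[n] ⁻¹' V)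
      ≤ μ.real (B ∆ U) + μ.real (T^[n] ⁻¹' (Bᶜ ∆ V)) + μ.real (B ∆ (T^[n] ⁻¹' B)) :=
        (measureReal_mono hsub).trans <| (measureReal_union_le _ _).trans <|
          add_le_add_left (measureReal_union_le _ _) _
    _ = μ.real (B ∆ U) + μ.real (Bᶜ ∆ V) := by
      rw [hBn, add_zero, (hT.iterate n).measureReal_preimage
        (hBm.compl.symmDiff hV).nullMeasurableSet]

lemma measureReal_le_add_measureReal_symmDiff (s t : Set α) :
    μ.real s ≤ μ.real t + μ.real (s ∆ t) :=
  (measureReal_mono fun x hx => by by_cases x ∈ t <;> simp_all [mem_symmDiff]).trans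
    (measureReal_union_le _ _)

lemma MeasureTheory.Measure.MeasureDense.exists_measureReal_symmDiff_lt {𝒜 : Set (Set α)}
    (h𝒜 : μ.MeasureDense 𝒜) {s : Set α} (hs : MeasurableSet s) {ε : ℝ} (hε : 0 < ε) :
    ∃ t ∈ 𝒜, μ.real (s ∆ t) < ε := by
  obtain ⟨t, ht, hst⟩ := h𝒜.approx s hs (measure_ne_top _ _) ε hε
  exact ⟨t, ht, ENNReal.toReal_lt_of_lt_ofReal hst⟩

lemma exists_pos_two_mul_lt_mul_sub_mul_sub {δ a b : ℝ} (hδ : 0 < δ) (ha : 0 < a) (hb : 0 < b) :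
    ∃ ε > 0, ε < a ∧ ε < b ∧ 2 * ε < δ * ((a - ε) * (b - ε)) := by
  have hsmall : ∀ᶠ ε in 𝓝 (0 : ℝ), 2 * ε < δ * ((a - ε) * (b - ε)) :=
    ContinuousAt.eventually_lt (by fun_prop) (by fun_prop) (by simpa using by positivity)
  obtain ⟨ε, ⟨⟨hε, hεa⟩, hεb⟩, hεpos⟩ :=
    ((((eventually_lt_nhds ha).and (eventually_lt_nhds hb)).and hsmall).filter_mono
      nhdsWithin_le_nhds |>.and (self_mem_nhdsWithin : ∀ᶠ ε in 𝓝[>] (0 : ℝ), 0 < ε)).exists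
  exact ⟨ε, hεpos, hε, hεa, hεb⟩

theorem MeasureTheory.MeasurePreserving.ergodic_of_measureDense (hT : MeasurePreserving T μ μ)
    {𝒜 : Set (Set α)} (h𝒜 : μ.MeasureDense 𝒜) {δ : ℝ} (hδ : 0 < δ)
    (hmix : ∀ U ∈ 𝒜, ∀ V ∈ 𝒜, ∃ n, δ * (μ.real U * μ.real V) ≤ μ.real (U ∩ T^[n] ⁻¹' V)) :
    Ergodic T μ := by
  refine ⟨hT, ⟨fun B hBm hB => ?_⟩⟩
  rw [eventuallyConst_set', ae_eq_empty, ae_eq_univ]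
  by_contra! hpos
  have ha : 0 < μ.real B := ENNReal.toReal_pos hpos.1 (measure_ne_top _ _)
  have hb : 0 < μ.real Bᶜ := ENNReal.toReal_pos hpos.2 (measure_ne_top _ _)
  obtain ⟨ε, hε, hεa, hεb, hεδ⟩ := exists_pos_two_mul_lt_mul_sub_mul_sub hδ ha hb
  obtain ⟨U, hU, hBU⟩ := h𝒜.exists_measureReal_symmDiff_lt hBm hε
  obtain ⟨V, hV, hBV⟩ := h𝒜.exists_measureReal_symmDiff_lt hBm.compl hε
  obtain ⟨n, hn⟩ := hmix U hU V hV
  have hUlow : μ.real B - ε ≤ μ.real U := by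
    linarith [measureReal_le_add_measureReal_symmDiff (μ := μ) B U]
  have hVlow : μ.real Bᶜ - ε ≤ μ.real V := by
    linarith [measureReal_le_add_measureReal_symmDiff (μ := μ) Bᶜ V]
  have : δ * ((μ.real B - ε) * (μ.real Bᶜ - ε)) < 2 * ε := calc
    _ ≤ δ * (μ.real U * μ.real V) := by gcongr
    _ ≤ μ.real (U ∩ T^[n] ⁻¹' V) := hn
    _ ≤ μ.real (B ∆ U) + μ.real (Bᶜ ∆ V) :=
      measureReal_inter_preimage_iterate_le_of_preimage_ae_eq hT hBm (.of_eq hB) U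
        (h𝒜.measurable V hV) n
    _ < 2 * ε := by linarith
  linarith

end ErgodicCriterion

lemma measureDense_measurableCylinders {ι : Type*} {α : ι → Type*}
    [∀ i, MeasurableSpace (α i)] (μ : Measure (∀ i, α i)) [IsFiniteMeasure μ] :
    μ.MeasureDense (measurableCylinders α) :=
  .of_generateFrom_isSetAlgebra_finite μ isSetAlgebra_measurableCylinders
    generateFrom_measurableCylinders.symm

section ShiftSpace

variable {A : Type*}

lemma shiftMap_iterate_apply (s : ℕ) (ω : ℕ → A) (n : ℕ) : shiftMap^[s] ω n = ω (n + s) := by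
  induction s generalizing ω with
  | zero => rfl
  | succ s ih => rw [Function.iterate_succ_apply, ih]; rfl

def initWord (n : ℕ) (ω : ℕ → A) : Fin n → A := fun i => ω i

lemma cyl_ofFn {n : ℕ} (g : Fin n → A) : cyl (List.ofFn g) = initWord n ⁻¹' {g} := by
  ext ω
  simp only [cyl, mem_ofPred_eq, mem_preimage, mem_singleton_iff, funext_iff, initWord,
    List.get_ofFn]
  exact ⟨fun h i => h (i.cast List.length_ofFn.symm), fun h i => h (i.cast List.length_ofFn)⟩

lemma cyl_append (x y : List A) :
    cyl (x ++ y) = cyl x ∩ shiftMap^[x.length] ⁻¹' cyl y := by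
  ext ω
  simp only [cyl, mem_inter_iff, mem_ofPred_eq, mem_preimage, Fin.forall_iff,
    List.length_append, List.get_eq_getElem, shiftMap_iterate_apply]
  constructor
  · intro h
    refine ⟨fun i hi => ?_, fun j hj => ?_⟩
    · rw [h i (by omega), List.getElem_append_left hi]
    · rw [h (j + x.length) (by omega), List.getElem_append_right (by omega)]
      simp
  · rintro ⟨h1, h2⟩ i hi
    by_cases hix : i < x.length
    · rw [h1 i hix, List.getElem_append_left hix]
    · have := h2 (i - x.length) (by omega)
      rw [Nat.sub_add_cancel (by omega)] at this
      rw [this, List.getElem_append_right (by omega)]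

variable [MeasurableSpace A]

lemma measurable_shiftMap : Measurable (shiftMap (A := A)) :=
  measurable_pi_lambda _ fun n => measurable_pi_apply (n + 1)

lemma measurable_initWord (n : ℕ) : Measurable (initWord (A := A) n) :=
  measurable_pi_lambda _ fun i => measurable_pi_apply (i : ℕ)

lemma exists_eq_preimage_initWord_of_mem_measurableCylinders [Fintype A] {U : Set (ℕ → A)}
    (hU : U ∈ measurableCylinders fun _ : ℕ => A) (N : ℕ) :
    ∃ n, N ≤ n ∧ ∃ F : Finset (Fin n → A), U = initWord n ⁻¹' F := by
  classical
  obtain ⟨s, S, -, rfl⟩ := (mem_measurableCylinders U).1 hU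
  set n := max N (s.sup id + 1)
  have hsn : ∀ i ∈ s, i < n := fun i hi =>
    (Nat.lt_succ_of_le (Finset.le_sup (f := id) hi)).trans_le (le_max_right _ _)
  refine ⟨n, le_max_left _ _,
    Finset.univ.filter fun g : Fin n → A => (fun i : s => g ⟨i, hsn i i.2⟩) ∈ S, ?_⟩
  ext ω
  simp only [mem_cylinder, mem_preimage, Finset.coe_filter, Finset.mem_univ, true_and,
    mem_ofPred_eq]
  rfl

lemma measurePreserving_shiftMap {P : Measure (ℕ → A)}
    (hinv : ∀ S : Set (ℕ → A), MeasurableSet S → P (shiftMap ⁻¹' S) = P S) :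
    MeasurePreserving shiftMap P P :=
  ⟨measurable_shiftMap, Measure.ext fun S hS => by
    rw [Measure.map_apply measurable_shiftMap hS, hinv S hS]⟩

end ShiftSpace

lemma sum_measureReal_preimage_singleton_inter {α β : Type*} [MeasurableSpace α]
    [MeasurableSpace β] [Fintype β] [MeasurableSingletonClass β] {μ : Measure α}
    [IsFiniteMeasure μ] {f : α → β} (hf : Measurable f) (X : Set α) :
    ∑ b, μ.real (f ⁻¹' {b} ∩ X) = μ.real X := by
  have := sum_measureReal_preimage_singleton (μ := μ.restrict X) Finset.univ
    fun b _ => hf (measurableSet_singleton b)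
  simpa [measureReal_restrict_apply (hf (measurableSet_singleton _))] using this

lemma exists_div_le_of_le_sum {ι : Type*} {s : Finset ι} (hs : s.Nonempty) {f : ι → ℝ}
    {a K : ℝ} (ha : 0 ≤ a) (hK : (s.card : ℝ) ≤ K) (h : a ≤ ∑ i ∈ s, f i) :
    ∃ i ∈ s, a / K ≤ f i := by
  have hKpos : 0 < K := (Nat.cast_pos.2 hs.card_pos).trans_le hK
  refine Finset.exists_le_of_sum_le hs (le_trans ?_ h)
  rw [Finset.sum_const, nsmul_eq_mul]
  calc (s.card : ℝ) * (a / K) ≤ K * (a / K) := by gcongr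
    _ = a := mul_div_cancel₀ a hKpos.ne'

section Decoupling

variable {A : Type*} [MeasurableSpace A] [MeasurableSingletonClass A]

lemma measureReal_preimage_initWord (P : Measure (ℕ → A)) [IsFiniteMeasure P] (n : ℕ)
    (F : Finset (Fin n → A)) :
    P.real (initWord n ⁻¹' F) = ∑ u ∈ F, P.real (cyl (List.ofFn u)) := by
  simp_rw [cyl_ofFn]
  exact (sum_measureReal_preimage_singleton F
    fun u _ => measurable_initWord n (measurableSet_singleton u)).symm

lemma measureReal_preimage_initWord_inter_preimage_iterate (P : Measure (ℕ → A))
    [IsFiniteMeasure P] {n₁ n₂ : ℕ} (F₁ : Finset (Fin n₁ → A))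
    (F₂ : Finset (Fin n₂ → A)) (s : ℕ) :
    P.real (initWord n₁ ⁻¹' F₁ ∩ shiftMap^[s] ⁻¹' (initWord n₂ ⁻¹' F₂)) =
      ∑ u ∈ F₁, ∑ v ∈ F₂, P.real (cyl (List.ofFn u) ∩ shiftMap^[s] ⁻¹' cyl (List.ofFn v)) := by
  set f : (ℕ → A) → (Fin n₁ → A) × (Fin n₂ → A) :=
    fun ω => (initWord n₁ ω, initWord n₂ (shiftMap^[s] ω))
  have hf : Measurable f :=
    (measurable_initWord n₁).prodMk ((measurable_initWord n₂).comp (measurable_shiftMap.iterate s))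
  have hfib : ∀ p, f ⁻¹' {p} = cyl (List.ofFn p.1) ∩ shiftMap^[s] ⁻¹' cyl (List.ofFn p.2) := by
    intro p
    ext ω
    simp [f, cyl_ofFn, Prod.ext_iff]
  simp_rw [← Finset.sum_product', ← hfib]
  rw [sum_measureReal_preimage_singleton _ fun p _ => hf (measurableSet_singleton p)]
  congr 1
  ext ω
  simp [f]

variable [Fintype A]

def LowerDecoupling (P : Measure (ℕ → A)) (c : ℝ) (k : ℕ) (τ : ℕ → ℕ) : Prop :=
  ∀ (t : ℕ) (u v : List A), u.length = t → v ≠ [] →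
    Real.exp (-c) * (P.real (cyl u) * P.real (cyl v)) ≤
      ∑ i ∈ Finset.Icc (τ t - k) (τ t), ∑ g : Fin i → A, P.real (cyl (u ++ List.ofFn g ++ v))

variable (P : Measure (ℕ → A)) [IsFiniteMeasure P]

lemma sum_measureReal_cyl_append_ofFn_append (u v : List A) (i : ℕ) :
    ∑ g : Fin i → A, P.real (cyl (u ++ List.ofFn g ++ v)) =
      P.real (cyl u ∩ shiftMap^[u.length + i] ⁻¹' cyl v) := by
  have hsplit : ∀ g : Fin i → A, cyl (u ++ List.ofFn g ++ v) =
      (initWord i ∘ shiftMap^[u.length]) ⁻¹' {g} ∩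
        (cyl u ∩ shiftMap^[u.length + i] ⁻¹' cyl v) := by
    intro g
    rw [cyl_append, cyl_append, List.length_append, List.length_ofFn, cyl_ofFn, preimage_comp]
    ext ω
    simp only [mem_inter_iff, mem_preimage]
    tauto
  simp_rw [hsplit]
  exact sum_measureReal_preimage_singleton_inter
    ((measurable_initWord i).comp (measurable_shiftMap.iterate _)) _

theorem LowerDecoupling.le_sum_measureReal_preimage_initWord_inter {c : ℝ} {k : ℕ}
    {τ : ℕ → ℕ} (hdec : LowerDecoupling P c k τ) {n₁ n₂ : ℕ} (hn₂ : n₂ ≠ 0)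
    (F₁ : Finset (Fin n₁ → A)) (F₂ : Finset (Fin n₂ → A)) :
    Real.exp (-c) * (P.real (initWord n₁ ⁻¹' F₁) * P.real (initWord n₂ ⁻¹' F₂)) ≤
      ∑ i ∈ Finset.Icc (τ n₁ - k) (τ n₁),
        P.real (initWord n₁ ⁻¹' F₁ ∩ shiftMap^[n₁ + i] ⁻¹' (initWord n₂ ⁻¹' F₂)) := by
  have hword : ∀ (u : Fin n₁ → A) (v : Fin n₂ → A),
      Real.exp (-c) * (P.real (cyl (List.ofFn u)) * P.real (cyl (List.ofFn v))) ≤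
        ∑ i ∈ Finset.Icc (τ n₁ - k) (τ n₁),
          P.real (cyl (List.ofFn u) ∩ shiftMap^[n₁ + i] ⁻¹' cyl (List.ofFn v)) := by
    intro u v
    have := hdec n₁ (List.ofFn u) (List.ofFn v) List.length_ofFn (by simpa using hn₂)
    simpa only [sum_measureReal_cyl_append_ofFn_append, List.length_ofFn] using this
  calc Real.exp (-c) * (P.real (initWord n₁ ⁻¹' F₁) * P.real (initWord n₂ ⁻¹' F₂))
      = ∑ u ∈ F₁, ∑ v ∈ F₂,
          Real.exp (-c) * (P.real (cyl (List.ofFn u)) * P.real (cyl (List.ofFn v))) := by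
        simp_rw [measureReal_preimage_initWord, Finset.sum_mul_sum, Finset.mul_sum]
    _ ≤ ∑ u ∈ F₁, ∑ v ∈ F₂, ∑ i ∈ Finset.Icc (τ n₁ - k) (τ n₁),
          P.real (cyl (List.ofFn u) ∩ shiftMap^[n₁ + i] ⁻¹' cyl (List.ofFn v)) := by
        gcongr with u _ v _
        exact hword u v
    _ = _ := by
        simp_rw [measureReal_preimage_initWord_inter_preimage_iterate]
        exact (Finset.sum_congr rfl fun u _ => Finset.sum_comm).trans Finset.sum_comm

theorem LowerDecoupling.exists_le_measureReal_inter_preimage_iterate {c : ℝ} {k : ℕ}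
    {τ : ℕ → ℕ} (hdec : LowerDecoupling P c k τ) {U V : Set (ℕ → A)}
    (hU : U ∈ measurableCylinders fun _ : ℕ => A) (hV : V ∈ measurableCylinders fun _ : ℕ => A) :
    ∃ s, Real.exp (-c) / (k + 1) * (P.real U * P.real V) ≤ P.real (U ∩ shiftMap^[s] ⁻¹' V) := by
  obtain ⟨n₁, -, F₁, rfl⟩ := exists_eq_preimage_initWord_of_mem_measurableCylinders hU 0
  -- `V` is read through a nonempty window, as the decoupling condition requires `v ≠ []`.
  obtain ⟨n₂, hn₂, F₂, rfl⟩ := exists_eq_preimage_initWord_of_mem_measurableCylinders hV 1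
  have hcard : ((Finset.Icc (τ n₁ - k) (τ n₁)).card : ℝ) ≤ k + 1 := by
    rw [Nat.card_Icc]
    exact_mod_cast (by omega : τ n₁ + 1 - (τ n₁ - k) ≤ k + 1)
  obtain ⟨i, -, hi⟩ := exists_div_le_of_le_sum (Finset.nonempty_Icc.2 (Nat.sub_le _ _))
    (by positivity) hcard (hdec.le_sum_measureReal_preimage_initWord_inter P (by omega) F₁ F₂)
  exact ⟨n₁ + i, by rwa [div_mul_eq_mul_div]⟩

end Decoupling

theorem stmt_7_general {A : Type*} [Fintype A] [MeasurableSpace A] [MeasurableSingletonClass A]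
    (P : Measure (ℕ → A)) [IsProbabilityMeasure P]
    (hinv : ∀ S : Set (ℕ → A), MeasurableSet S → P (shiftMap ⁻¹' S) = P S)
    (c : ℝ) (k : ℕ) (τ : ℕ → ℕ)
    (hdec : ∀ (t : ℕ) (u v : List A), u.length = t → v ≠ [] →
      Real.exp (-c) * ((P (cyl u)).toReal * (P (cyl v)).toReal) ≤
        ∑ i ∈ Finset.Icc (τ t - k) (τ t), ∑ g : Fin i → A,
          (P (cyl (u ++ List.ofFn g ++ v))).toReal) :
    ∀ B : Set (ℕ → A), MeasurableSet B → P (symmDiff B (shiftMap ⁻¹' B)) = 0 →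
      P B = 0 ∨ P B = 1 := by
  intro B hB hBinv
  have hergodic : Ergodic shiftMap P :=
    (measurePreserving_shiftMap hinv).ergodic_of_measureDense
      (measureDense_measurableCylinders P) (by positivity) fun _ hU _ hV =>
        LowerDecoupling.exists_le_measureReal_inter_preimage_iterate P hdec hU hV
  rcases hergodic.quasiErgodic.ae_empty_or_univ₀ hB.nullMeasurableSet
    (measure_symmDiff_eq_zero_iff.1 hBinv).symm with hB0 | hB1
  · exact Or.inl (by simpa using measure_congr hB0)
  · exact Or.inr (by simpa using measure_congr hB1)

theorem stmt_7 {A : Type*} [Fintype A] [MeasurableSpace A] [MeasurableSingletonClass A]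
    (P : Measure (ℕ → A)) [IsProbabilityMeasure P]
    (hinv : ∀ S : Set (ℕ → A), MeasurableSet S → P (shiftMap ⁻¹' S) = P S)
    (c : ℝ) (hc : 0 < c) (k : ℕ) (τ : ℕ → ℕ)
    (hdec : ∀ (t : ℕ) (u v : List A), u.length = t → v ≠ [] →
      Real.exp (-c) * ((P (cyl u)).toReal * (P (cyl v)).toReal) ≤
        ∑ i ∈ Finset.Icc (τ t - k) (τ t), ∑ g : Fin i → A,
          (P (cyl (u ++ List.ofFn g ++ v))).toReal) :
    ∀ B : Set (ℕ → A), MeasurableSet B → P (symmDiff B (shiftMap ⁻¹' B)) = 0 →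
      P B = 0 ∨ P B = 1 :=
  stmt_7_general P hinv c k τ hdec
end

section
/- Transient fluctuation relation: let P, P̂ be probability measures on the finite set A^t with P ≪ P̂, and suppose P̂ = P ∘ θ for an involution θ : A^t → A^t with θ(supp P) = supp P. Define σ(w) = log(P(w)/P̂(w)) for w in the support of P. Then σ ∘ θ = −σ on the support of P, and for every s ∈ ℝ, P({w : σ(w) = s}) = e^{s} · P({w : σ(w) = −s}). -/
/-! On the support of `P` the likelihood ratio gives `P w = e^{σ w} P (θ w)`, and `σ ∘ θ = -σ`
because `θ` is an involution. Hence the `s`-level set of `σ` is carried by `θ` onto the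
`-s`-level set with weights scaled by `e^s`, and reindexing the sum by the bijection `θ` gives
the fluctuation relation. -/

open Function

namespace FluctuationRelation

variable {α : Type*} {P : α → ℝ} {θ : α → α}

noncomputable def entropyProduction (P : α → ℝ) (θ : α → α) (w : α) : ℝ :=
  Real.log (P w / P (θ w))

noncomputable def levelMass [Fintype α] (P σ : α → ℝ) (s : ℝ) : ℝ :=
  ∑ w, if P w ≠ 0 ∧ σ w = s then P w else 0

theorem entropyProduction_apply_of_involutive (hθ : Involutive θ) (w : α) :
    entropyProduction P θ (θ w) = -entropyProduction P θ w := by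
  rw [entropyProduction, entropyProduction, hθ w, ← Real.log_inv, inv_div]

theorem apply_ne_zero_iff_of_involutive (hθ : Involutive θ)
    (hac : ∀ w, P (θ w) = 0 → P w = 0) (w : α) : P (θ w) ≠ 0 ↔ P w ≠ 0 :=
  ⟨fun h hw => h (hac (θ w) (by rwa [hθ w])), fun h hw => h (hac w hw)⟩

theorem apply_eq_exp_entropyProduction_mul {w : α} (hw : 0 < P w) (hθw : 0 < P (θ w)) :
    P w = Real.exp (entropyProduction P θ w) * P (θ w) := by
  rw [entropyProduction, Real.exp_log (div_pos hw hθw), div_mul_cancel₀ _ hθw.ne']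

theorem levelWeight_eq_exp_mul_levelWeight_apply (hnn : ∀ w, 0 ≤ P w) (hθ : Involutive θ)
    (hac : ∀ w, P (θ w) = 0 → P w = 0) (s : ℝ) (w : α) :
    (if P w ≠ 0 ∧ entropyProduction P θ w = s then P w else 0) =
      Real.exp s *
        if P (θ w) ≠ 0 ∧ entropyProduction P θ (θ w) = -s then P (θ w) else 0 := by
  simp only [apply_ne_zero_iff_of_involutive hθ hac, entropyProduction_apply_of_involutive hθ,
    neg_inj]
  split_ifs with h
  · have hθw : P (θ w) ≠ 0 := (apply_ne_zero_iff_of_involutive hθ hac w).2 h.1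
    rw [← h.2]
    exact apply_eq_exp_entropyProduction_mul ((hnn w).lt_of_ne' h.1) ((hnn _).lt_of_ne' hθw)
  · rw [mul_zero]

theorem levelMass_entropyProduction [Fintype α] (hnn : ∀ w, 0 ≤ P w) (hθ : Involutive θ)
    (hac : ∀ w, P (θ w) = 0 → P w = 0) (s : ℝ) :
    levelMass P (entropyProduction P θ) s =
      Real.exp s * levelMass P (entropyProduction P θ) (-s) := by
  rw [levelMass, levelMass, Finset.mul_sum,
    ← (Equiv.sum_comp hθ.toPerm (fun w => Real.exp s * _))]
  exact Finset.sum_congr rfl fun w _ => levelWeight_eq_exp_mul_levelWeight_apply hnn hθ hac s w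

end FluctuationRelation

open FluctuationRelation

open Classical in
theorem stmt_14_general {A : Type*} [Fintype A] (t : ℕ) (P : (Fin t → A) → ℝ)
    (hnn : ∀ w, 0 ≤ P w)
    (θ : (Fin t → A) → (Fin t → A)) (hθ : ∀ w, θ (θ w) = w)
    (hac : ∀ w, P (θ w) = 0 → P w = 0) :
    (∀ w, P w ≠ 0 →
      Real.log (P (θ w) / P (θ (θ w))) = -Real.log (P w / P (θ w))) ∧
    ∀ s : ℝ,
      (∑ w, if P w ≠ 0 ∧ Real.log (P w / P (θ w)) = s then P w else 0) =
        Real.exp s *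
          ∑ w, if P w ≠ 0 ∧ Real.log (P w / P (θ w)) = -s then P w else 0 :=
  ⟨fun w _ => entropyProduction_apply_of_involutive hθ w,
    levelMass_entropyProduction hnn hθ hac⟩

open Classical in
theorem stmt_14 {A : Type*} [Fintype A] (t : ℕ) (P : (Fin t → A) → ℝ)
    (hnn : ∀ w, 0 ≤ P w) (hsum : ∑ w, P w = 1)
    (θ : (Fin t → A) → (Fin t → A)) (hθ : ∀ w, θ (θ w) = w)
    (hsupp : θ '' {w | P w ≠ 0} = {w | P w ≠ 0})
    (hac : ∀ w, P (θ w) = 0 → P w = 0) :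
    (∀ w, P w ≠ 0 →
      Real.log (P (θ w) / P (θ (θ w))) = -Real.log (P w / P (θ w))) ∧
    ∀ s : ℝ,
      (∑ w, if P w ≠ 0 ∧ Real.log (P w / P (θ w)) = s then P w else 0) =
        Real.exp s *
          ∑ w, if P w ≠ 0 ∧ Real.log (P w / P (θ w)) = -s then P w else 0 :=
  stmt_14_general t P hnn θ hθ hac
end
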